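/- Let H ⊆ Y^X be a multiclass hypothesis class with finite label set Y, and let ℓ∘H = {(x,y) ↦ 1[h(x) ≠ y] : h ∈ H} be its loss class. For any finite sequence x₁,…,xₙ ∈ X with empirical measure μ̂ₙ, and any ε > 0: N(ε, H, d_{μ̂ₙ}) ≤ sup_{μ̃ ∈ Π(X×Y)} N(2ε/|Y|, ℓ∘H, d_{μ̃}), where d_{μ̂ₙ}(h,h') = (1/n)∑ᵢ 1[h(xᵢ)≠h'(xᵢ)] and d_{μ̃}(f,g) = P_{(x,y)∼μ̃}[f(x,y) ≠ g(x,y)]. -/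

import Mathlib

open MeasureTheory ENNReal

noncomputable def coverNum {G : Type*} (d : G → G → ℝ) (ε : ℝ) (A : Set G) : ℕ∞ :=
  sInf {n : ℕ∞ | ∃ C : Set G, C ⊆ A ∧ (∀ g ∈ A, ∃ g' ∈ C, d g g' ≤ ε) ∧ C.encard = n}

/-- The empirical (normalized Hamming) metric induced by the sample `x : Fin n → X`. -/
noncomputable def empDistSeq {X Y : Type*} [DecidableEq Y] {n : ℕ} (x : Fin n → X)
    (f g : X → Y) : ℝ :=
  (∑ t, if f (x t) ≠ g (x t) then (1 : ℝ) else 0) / n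


/-! Draw `x` from the sample and `y` uniformly from `Y`. Whenever `h xᵢ ≠ h' xᵢ`, the losses of
`h` and `h'` differ at the two points `(xᵢ, h xᵢ)` and `(xᵢ, h' xᵢ)`, and they agree elsewhere,
so the disagreement probability of `ℓ∘h` and `ℓ∘h'` is at least `2/|Y|` times the empirical
distance of `h` and `h'`. Pulling a `2ε/|Y|`-cover of `ℓ∘H` back along `h ↦ ℓ∘h` thus gives an
`ε`-cover of `H` with no more elements. -/

theorem coverNum_le_coverNum_image {G G' : Type*} {d : G → G → ℝ} {d' : G' → G' → ℝ}
    {ε ε' : ℝ} {A : Set G} (f : G → G')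
    (hf : ∀ g ∈ A, ∀ g' ∈ A, d' (f g) (f g') ≤ ε' → d g g' ≤ ε) :
    coverNum d ε A ≤ coverNum d' ε' (f '' A) := by
  refine le_sInf ?_
  rintro _ ⟨C', hC'A, hC'cov, rfl⟩
  obtain ⟨C, hCA, hCinj, rfl⟩ := Set.SurjOn.exists_subset_injOn_image_eq hC'A
  refine sInf_le ⟨C, hCA, fun g hg => ?_, hCinj.encard_image.symm⟩
  obtain ⟨_, ⟨g', hg'C, rfl⟩, hd⟩ := hC'cov (f g) (Set.mem_image_of_mem f hg)
  exact ⟨g', hg'C, hf g hg g' (hCA hg'C) hd⟩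

noncomputable def empiricalMeasure {ι α : Type*} [Fintype ι] [MeasurableSpace α] (a : ι → α) :
    Measure α :=
  (Fintype.card ι : ℝ≥0∞)⁻¹ • ∑ i, Measure.dirac (a i)

section empiricalMeasure

variable {ι α : Type*} [Fintype ι] [Nonempty ι] [MeasurableSpace α]

instance isProbabilityMeasure_empiricalMeasure (a : ι → α) :
    IsProbabilityMeasure (empiricalMeasure a) := by
  constructor
  have hcard : (Fintype.card ι : ℝ≥0∞) ≠ 0 := by exact_mod_cast Fintype.card_ne_zero
  simp [empiricalMeasure, ENNReal.inv_mul_cancel hcard (natCast_ne_top _)]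

theorem card_filter_div_le_toReal_empiricalMeasure (a : ι → α) (s : Set α)
    [DecidablePred (· ∈ s)] :
    ((Finset.univ.filter fun i => a i ∈ s).card : ℝ) / Fintype.card ι ≤
      (empiricalMeasure a s).toReal := by
  have hsum : ((Finset.univ.filter fun i => a i ∈ s).card : ℝ≥0∞) ≤
      ∑ i, Measure.dirac (a i) s := by
    rw [Finset.card_filter, Nat.cast_sum]
    refine Finset.sum_le_sum fun i _ => ?_
    split_ifs with h
    · simp [Measure.dirac_apply_of_mem h]
    · simp
  have hle : ((Finset.univ.filter fun i => a i ∈ s).card : ℝ≥0∞) / Fintype.card ι ≤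
      empiricalMeasure a s := by
    rw [empiricalMeasure, Measure.smul_apply, Measure.finsetSum_apply, smul_eq_mul,
      ENNReal.div_eq_inv_mul]
    gcongr
  simpa using ENNReal.toReal_mono (measure_ne_top _ _) hle

end empiricalMeasure

section zeroOneLoss

variable {X Y : Type*} [DecidableEq Y]

def zeroOneLoss (h : X → Y) (p : X × Y) : ℝ :=
  if h p.1 ≠ p.2 then 1 else 0

theorem zeroOneLoss_ne_iff {h h' : X → Y} {a : X} {y : Y} :
    zeroOneLoss h (a, y) ≠ zeroOneLoss h' (a, y) ↔ h a ≠ h' a ∧ (y = h a ∨ y = h' a) := by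
  unfold zeroOneLoss
  split_ifs <;> grind

variable [Fintype Y]

theorem card_filter_zeroOneLoss_ne (h h' : X → Y) (a : X) :
    (Finset.univ.filter fun y => zeroOneLoss h (a, y) ≠ zeroOneLoss h' (a, y)).card =
      if h a ≠ h' a then 2 else 0 := by
  simp_rw [zeroOneLoss_ne_iff]
  split_ifs with ha
  · rw [← Finset.card_pair ha]
    congr 1
    ext y
    simp [ha]
  · simp_all

theorem card_filter_zeroOneLoss_ne_prod {ι : Type*} [Fintype ι] (x : ι → X) (h h' : X → Y) :
    (Finset.univ.filter fun p : ι × Y =>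
        zeroOneLoss h (x p.1, p.2) ≠ zeroOneLoss h' (x p.1, p.2)).card =
      2 * (Finset.univ.filter fun i => h (x i) ≠ h' (x i)).card := by
  rw [← Finset.univ_product_univ, Finset.card_filter, Finset.sum_product]
  simp_rw [← Finset.card_filter, card_filter_zeroOneLoss_ne, Finset.card_filter, Finset.mul_sum]
  simp

end zeroOneLoss

theorem empDistSeq_eq_card_div {X Y : Type*} [DecidableEq Y] {n : ℕ} (x : Fin n → X)
    (f g : X → Y) :
    empDistSeq x f g = (Finset.univ.filter fun t => f (x t) ≠ g (x t)).card / n := by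
  simp [empDistSeq, Finset.card_filter]

theorem two_div_card_mul_empDistSeq_le {X Y : Type*} [MeasurableSpace X] [MeasurableSpace Y]
    [Fintype Y] [Nonempty Y] [DecidableEq Y] {n : ℕ} [NeZero n] (x : Fin n → X)
    (h h' : X → Y) :
    2 / Fintype.card Y * empDistSeq x h h' ≤
      (empiricalMeasure (fun p : Fin n × Y => (x p.1, p.2))
        {p | zeroOneLoss h p ≠ zeroOneLoss h' p}).toReal := by
  classical
  have hle := card_filter_div_le_toReal_empiricalMeasure (fun p : Fin n × Y => (x p.1, p.2))
    {p | zeroOneLoss h p ≠ zeroOneLoss h' p}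
  simp only [Set.mem_ofPred_eq, card_filter_zeroOneLoss_ne_prod, Fintype.card_prod,
    Fintype.card_fin] at hle
  rw [empDistSeq_eq_card_div]
  convert hle using 1
  push_cast
  ring

theorem coverNum_le_lossClass_coverNum_general {X Y : Type*} [MeasurableSpace X]
    [MeasurableSpace Y] [Fintype Y] [Nonempty Y] [DecidableEq Y] {n : ℕ} (hn : 0 < n)
    (x : Fin n → X) (H : Set (X → Y)) {ε : ℝ} :
    coverNum (empDistSeq x) ε H ≤
      ⨆ (μt : Measure (X × Y)) (_ : IsProbabilityMeasure μt),
        coverNum (fun f g => (μt {p | f p ≠ g p}).toReal) (2 * ε / Fintype.card Y)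
          {g : X × Y → ℝ | ∃ h ∈ H, g = fun p => if h p.1 ≠ p.2 then (1 : ℝ) else 0} := by
  have : NeZero n := ⟨hn.ne'⟩
  have hlossClass : {g : X × Y → ℝ | ∃ h ∈ H, g = fun p => if h p.1 ≠ p.2 then (1 : ℝ) else 0} =
      zeroOneLoss '' H := by
    ext g
    simp only [Set.mem_image, Set.mem_ofPred_eq, eq_comm (a := g)]
    rfl
  refine le_iSup₂_of_le (empiricalMeasure fun p : Fin n × Y => (x p.1, p.2)) inferInstance ?_
  rw [hlossClass]
  refine coverNum_le_coverNum_image zeroOneLoss fun h _ h' _ hd => ?_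
  have hY : (0 : ℝ) < 2 / Fintype.card Y := by positivity
  rw [← mul_le_mul_iff_right₀ hY]
  calc 2 / Fintype.card Y * empDistSeq x h h' ≤ _ := two_div_card_mul_empDistSeq_le x h h'
    _ ≤ 2 * ε / Fintype.card Y := hd
    _ = 2 / Fintype.card Y * ε := by ring

/-- Multiclass Haussler-type bound: for a finite label set `Y`, the empirical covering
number of `H` at scale `ε` is at most the worst-case covering number of its loss
class `ℓ∘H` at scale `2ε/|Y|` over all joint distributions on `X × Y`. -/
theorem coverNum_le_lossClass_coverNum {X Y : Type*} [MeasurableSpace X]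
    [MeasurableSpace Y] [Fintype Y] [Nonempty Y] [DecidableEq Y] {n : ℕ} (hn : 0 < n)
    (x : Fin n → X) (H : Set (X → Y)) {ε : ℝ} (hε : 0 < ε) :
    coverNum (empDistSeq x) ε H ≤
      ⨆ (μt : Measure (X × Y)) (_ : IsProbabilityMeasure μt),
        coverNum (fun f g => (μt {p | f p ≠ g p}).toReal) (2 * ε / Fintype.card Y)
          {g : X × Y → ℝ | ∃ h ∈ H, g = fun p => if h p.1 ≠ p.2 then (1 : ℝ) else 0} :=
  coverNum_le_lossClass_coverNum_general hn x H
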